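/- arXiv:2605.07963 — 6 statements merged into one kernel-verified Lean document; each statement's English description precedes it below -/
import Mathlib

section
/- The analogous closure property fails for p-values under averaging with constant factor 1: there exists a probability space and p-variables P_1, P_2 such that (P_1 + P_2)/2 is not a p-variable. Concretely, one can construct uniform-[0,1] random variables P_1, P_2 whose average M satisfies Prob(M ≤ ε) > ε for some ε ∈ (0,1). -/
open MeasureTheory
open scoped ENNReal

lemma aux_meas : Measurable (fun x : ℝ => 1 - x) := measurable_const.sub measurable_id

lemma aux_preimage : (fun x : ℝ => 1 - x) ⁻¹' Set.Icc (0:ℝ) 1 = Set.Icc 0 1 := by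
  ext x
  simp only [Set.mem_preimage, Set.mem_Icc]
  constructor <;> rintro ⟨h1, h2⟩ <;> constructor <;> linarith

lemma aux_map : (volume.restrict (Set.Icc (0:ℝ) 1)).map (fun x => 1 - x)
    = volume.restrict (Set.Icc (0:ℝ) 1) := by
  have h : (volume : Measure ℝ).map (fun x => 1 - x) = volume :=
    Measure.map_sub_left_eq_self volume 1
  calc (volume.restrict (Set.Icc (0:ℝ) 1)).map (fun x => 1 - x)
      = (volume.restrict ((fun x : ℝ => 1 - x) ⁻¹' Set.Icc (0:ℝ) 1)).map (fun x => 1 - x) := by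
        rw [aux_preimage]
    _ = ((volume : Measure ℝ).map (fun x => 1 - x)).restrict (Set.Icc (0:ℝ) 1) := by
        rw [Measure.restrict_map aux_meas measurableSet_Icc]
    _ = volume.restrict (Set.Icc (0:ℝ) 1) := by rw [h]

/-- p-variables are not closed under arithmetic averaging: there is a probability space
carrying two uniform-[0,1] random variables `P₁, P₂` (hence valid p-variables) whose
average `M = (P₁ + P₂)/2` fails the p-variable property: `Prob(M ≤ ε) > ε` for some
`ε ∈ (0,1)`. -/
theorem average_of_p_values_not_p_value :
    ∃ (Ω : Type) (_ : MeasurableSpace Ω) (μ : Measure Ω) (_ : IsProbabilityMeasure μ)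
      (P₁ P₂ : Ω → ℝ),
      Measurable P₁ ∧ Measurable P₂ ∧
      μ.map P₁ = volume.restrict (Set.Icc (0 : ℝ) 1) ∧
      μ.map P₂ = volume.restrict (Set.Icc (0 : ℝ) 1) ∧
      (∀ ε ∈ Set.Ioo (0 : ℝ) 1, μ {ω | P₁ ω ≤ ε} ≤ ENNReal.ofReal ε) ∧
      (∀ ε ∈ Set.Ioo (0 : ℝ) 1, μ {ω | P₂ ω ≤ ε} ≤ ENNReal.ofReal ε) ∧
      ∃ ε ∈ Set.Ioo (0 : ℝ) 1, ENNReal.ofReal ε < μ {ω | (P₁ ω + P₂ ω) / 2 ≤ ε} := by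
  refine ⟨ℝ, inferInstance, volume.restrict (Set.Icc 0 1),
    ⟨by simp [Real.volume_Icc]⟩, id, (fun x => 1 - x), measurable_id,
    aux_meas, by simp, aux_map, ?_, ?_, ?_⟩
  · intro ε hε
    simp only [id]
    have : {ω : ℝ | ω ≤ ε} = Set.Iic ε := rfl
    rw [this, Measure.restrict_apply measurableSet_Iic]
    have : {ω : ℝ | ω ≤ ε} ∩ Set.Icc 0 1 ⊆ Set.Icc 0 ε := by
      intro x hx; exact ⟨hx.2.1, hx.1⟩
    calc volume ({ω : ℝ | ω ≤ ε} ∩ Set.Icc 0 1) ≤ volume (Set.Icc 0 ε) := measure_mono this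
      _ = ENNReal.ofReal ε := by simp [Real.volume_Icc]
  · intro ε hε
    have hm : MeasurableSet {ω : ℝ | 1 - ω ≤ ε} := by
      have : {ω : ℝ | 1 - ω ≤ ε} = Set.Ici (1 - ε) := by
        ext x; simp [Set.mem_Ici]; constructor <;> intro h <;> linarith
      rw [this]; exact measurableSet_Ici
    rw [Measure.restrict_apply hm]
    have : {ω : ℝ | 1 - ω ≤ ε} ∩ Set.Icc 0 1 ⊆ Set.Icc (1 - ε) 1 := by
      intro x hx
      have h1 : 1 - x ≤ ε := hx.1
      exact ⟨by linarith, hx.2.2⟩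
    calc volume ({ω : ℝ | 1 - ω ≤ ε} ∩ Set.Icc 0 1) ≤ volume (Set.Icc (1-ε) 1) :=
          measure_mono this
      _ = ENNReal.ofReal ε := by rw [Real.volume_Icc, sub_sub_cancel]
  · refine ⟨1/2, ⟨by norm_num, by norm_num⟩, ?_⟩
    have hset : {ω : ℝ | (id ω + (1 - ω)) / 2 ≤ 1/2} = Set.univ := by
      ext x; simp
    rw [hset]
    simp only [Measure.restrict_apply MeasurableSet.univ, Set.univ_inter, Real.volume_Icc,
      sub_zero, ENNReal.ofReal_one]
    rw [ENNReal.ofReal_lt_one]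
    norm_num
end

section
/- Among all e-variables with respect to a distribution P on a finite set Y, the normalized odds e-variable e_y = (1/(|Y|−1))·(1−P(y))/P(y) uniquely maximizes the expected sum of log-e-values over false labels, i.e., uniquely maximizes E_{y~P}[ Σ_{y'≠y} ln f(y') ] over all functions f : Y → (0,∞) satisfying Σ_{y} P(y) f(y) ≤ 1. -/
open scoped BigOperators

/-- The normalized odds e-variable `e(y) = (1/(|Y|−1))·(1−P(y))/P(y)` uniquely maximizes
the expected sum of log-e-values over false labels,
`E_{y~P}[Σ_{y'≠y} ln f(y')] = Σ_y P(y) Σ_{y'≠y} ln f(y')`,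
over all `f : Y → (0,∞)` with `Σ_y P(y) f(y) ≤ 1`. -/
theorem odds_e_value_optimal
    {Y : Type*} [Fintype Y] [DecidableEq Y] (hY : 2 ≤ Fintype.card Y)
    (P : Y → ℝ) (hP : ∀ y, 0 < P y) (hsum : ∑ y, P y = 1)
    (e : Y → ℝ) (he : ∀ y, e y = (1 / ((Fintype.card Y : ℝ) - 1)) * ((1 - P y) / P y))
    (f : Y → ℝ) (hf : ∀ y, 0 < f y) (hfe : ∑ y, P y * f y ≤ 1) :
    (∑ y, P y * ∑ y' ∈ Finset.univ \ {y}, Real.log (f y')) ≤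
      (∑ y, P y * ∑ y' ∈ Finset.univ \ {y}, Real.log (e y')) ∧
    ((∑ y, P y * ∑ y' ∈ Finset.univ \ {y}, Real.log (f y')) =
      (∑ y, P y * ∑ y' ∈ Finset.univ \ {y}, Real.log (e y')) → f = e) := by
  classical
  have hc1 : (1:ℝ) < (Fintype.card Y : ℝ) := by
    have : (2:ℝ) ≤ (Fintype.card Y : ℝ) := by exact_mod_cast hY
    linarith
  set c : ℝ := (Fintype.card Y : ℝ) - 1 with hc_def
  clear_value c
  have hc : 0 < c := by simp only [hc_def]; linarith
  have hPlt : ∀ y, P y < 1 := by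
    intro y
    obtain ⟨z, hz⟩ := Fintype.exists_ne_of_one_lt_card (by omega) y
    have h2 : P y < ∑ y', P y' :=
      Finset.single_lt_sum hz (Finset.mem_univ y) (Finset.mem_univ z) (hP z)
        (fun k _ _ => (hP k).le)
    rw [hsum] at h2
    exact h2
  have hepos : ∀ y, 0 < e y := by
    intro y
    rw [he y]
    have h1 := hPlt y
    exact mul_pos (one_div_pos.mpr hc) (div_pos (by linarith) (hP y))
  -- reindexing
  have reindex : ∀ g : Y → ℝ,
      ∑ y, P y * ∑ y' ∈ Finset.univ \ {y}, g y' = ∑ y, (1 - P y) * g y := by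
    intro g
    have h1 : ∀ y : Y, ∑ y' ∈ Finset.univ \ {y}, g y' = (∑ y', g y') - g y := by
      intro y
      rw [Finset.sum_sdiff_eq_sub (Finset.subset_univ _), Finset.sum_singleton]
    simp_rw [h1, mul_sub, sub_mul, one_mul, Finset.sum_sub_distrib, ← Finset.sum_mul, hsum,
      one_mul]
  -- key pointwise identity
  have hkey : ∀ y, (1 - P y) * (f y / e y) = c * (P y * f y) := by
    intro y
    rw [he y]
    have h1 : P y ≠ 0 := (hP y).ne'
    have h2 : (1 : ℝ) - P y ≠ 0 := by have := hPlt y; linarith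
    have h3 : c ≠ 0 := hc.ne'
    rw [hc_def] at h3 ⊢
    field_simp
  set D : Y → ℝ := fun y =>
    (1 - P y) * Real.log (f y) - (1 - P y) * Real.log (e y) - (c * (P y * f y) - (1 - P y))
    with hD_def
  clear_value D
  have hDle : ∀ y, D y ≤ 0 := by
    intro y
    have hrpos : 0 < f y / e y := div_pos (hf y) (hepos y)
    have hlog : Real.log (f y / e y) ≤ f y / e y - 1 := Real.log_le_sub_one_of_pos hrpos
    have h1P : (0:ℝ) ≤ 1 - P y := by linarith [hPlt y]
    have := mul_le_mul_of_nonneg_left hlog h1P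
    rw [Real.log_div (hf y).ne' (hepos y).ne'] at this
    have hk := hkey y
    rw [mul_sub, mul_sub] at this
    simp only [hD_def]
    linarith
  have hDeq : ∀ y, D y = 0 → f y = e y := by
    intro y hy
    by_contra hne
    have hrpos : 0 < f y / e y := div_pos (hf y) (hepos y)
    have hr1 : f y / e y ≠ 1 := by
      intro h
      exact hne ((div_eq_one_iff_eq (hepos y).ne').mp h)
    have hlog : Real.log (f y / e y) < f y / e y - 1 := Real.log_lt_sub_one_of_pos hrpos hr1
    have h1P : (0:ℝ) < 1 - P y := by linarith [hPlt y]
    have := mul_lt_mul_of_pos_left hlog h1P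
    rw [Real.log_div (hf y).ne' (hepos y).ne'] at this
    have hk := hkey y
    rw [mul_sub, mul_sub] at this
    simp only [hD_def] at hy
    linarith
  have hsum1P : ∑ y, (1 - P y) = c := by
    simp [Finset.sum_sub_distrib, hsum, hc_def]
  have hsumD : ∑ y, D y =
      ((∑ y, (1 - P y) * Real.log (f y)) - (∑ y, (1 - P y) * Real.log (e y)))
        - (c * (∑ y, P y * f y) - c) := by
    simp only [hD_def]
    rw [Finset.sum_sub_distrib, Finset.sum_sub_distrib, Finset.sum_sub_distrib,
      ← Finset.mul_sum, hsum1P]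
  have hslack : c * (∑ y, P y * f y) - c ≤ 0 := by
    have := mul_le_mul_of_nonneg_left hfe hc.le
    linarith
  have hDsumle : ∑ y, D y ≤ 0 := Finset.sum_nonpos fun y _ => hDle y
  rw [reindex (fun y => Real.log (f y)), reindex (fun y => Real.log (e y))]
  constructor
  · linarith [hsumD, hDsumle, hslack]
  · intro hEq
    have hDsum0 : ∑ y, D y = 0 := by
      have h1 : 0 ≤ ∑ y, D y := by
        rw [hsumD, hEq]
        linarith
      linarith
    have := (Finset.sum_eq_zero_iff_of_nonpos (fun y _ => hDle y)).mp hDsum0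
    funext y
    exact hDeq y (this y (Finset.mem_univ y))
end

section
/- Among all e-variables with respect to a distribution P on a finite set Y, the inverse-probability e-variable e_y = 1/(|Y|·P(y)) uniquely maximizes the expected sum of log-e-values over all labels, i.e., uniquely maximizes Σ_{y'∈Y} ln f(y') over all functions f : Y → (0,∞) satisfying Σ_y P(y) f(y) ≤ 1. -/
/-!
With `n = |Y|` and `g y = n P(y) f(y)` we have `ln f(y) = ln g(y) + ln e(y)`, so it suffices that
`Σ ln g ≤ 0` with equality only for `g ≡ 1`. This follows from `ln x ≤ x - 1`, which is strict
for `x ≠ 1`, since `Σ (g - 1) = n Σ P f - n ≤ 0`.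
-/

open Real Finset

namespace Real

lemma log_eq_log_mul_add_log_one_div {a x : ℝ} (ha : 0 < a) (hx : 0 < x) :
    log x = log (a * x) + log (1 / a) := by
  rw [log_mul ha.ne' hx.ne', one_div, log_inv]
  ring

variable {ι : Type*} {s : Finset ι} {g : ι → ℝ}

lemma sum_log_le_sum_sub_one (hg : ∀ i ∈ s, 0 < g i) :
    ∑ i ∈ s, log (g i) ≤ ∑ i ∈ s, (g i - 1) :=
  sum_le_sum fun i hi => log_le_sub_one_of_pos (hg i hi)

lemma sum_log_eq_sum_sub_one_iff (hg : ∀ i ∈ s, 0 < g i) :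
    ∑ i ∈ s, log (g i) = ∑ i ∈ s, (g i - 1) ↔ ∀ i ∈ s, g i = 1 := by
  rw [sum_eq_sum_iff_of_le fun i hi => log_le_sub_one_of_pos (hg i hi)]
  refine forall₂_congr fun i hi => ⟨fun h => ?_, fun h => by simp [h]⟩
  by_contra hne
  exact (log_lt_sub_one_of_pos (hg i hi) hne).ne h

end Real

theorem inverse_probability_e_value_optimal_general
    {Y : Type*} [Fintype Y]
    (P : Y → ℝ) (hP : ∀ y, 0 < P y)
    (e : Y → ℝ) (he : ∀ y, e y = 1 / ((Fintype.card Y : ℝ) * P y))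
    (f : Y → ℝ) (hf : ∀ y, 0 < f y) (hfe : ∑ y, P y * f y ≤ 1) :
    (∑ y', Real.log (f y')) ≤ (∑ y', Real.log (e y')) ∧
    ((∑ y', Real.log (f y')) = (∑ y', Real.log (e y')) → f = e) := by
  set n : ℝ := (Fintype.card Y : ℝ)
  set g : Y → ℝ := fun y => n * P y * f y
  have hnP : ∀ y, 0 < n * P y := fun y =>
    mul_pos (Nat.cast_pos.mpr (Fintype.card_pos_iff.mpr ⟨y⟩)) (hP y)
  have hg : ∀ y ∈ univ, 0 < g y := fun y _ => mul_pos (hnP y) (hf y)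
  have hsplit : ∑ y, log (f y) = ∑ y, log (g y) + ∑ y, log (e y) := by
    rw [← sum_add_distrib]
    exact sum_congr rfl fun y _ => by
      rw [he y]; exact log_eq_log_mul_add_log_one_div (hnP y) (hf y)
  have hslack : ∑ y, (g y - 1) ≤ 0 := by
    have : ∑ y, (g y - 1) = n * ∑ y, P y * f y - n := by
      simp [g, n, sum_sub_distrib, mul_sum, mul_assoc]
    rw [this]
    nlinarith [(Nat.cast_nonneg (Fintype.card Y) : (0 : ℝ) ≤ n)]
  have hlog := sum_log_le_sum_sub_one hg
  refine ⟨by linarith, fun heq => funext fun y => ?_⟩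
  have hg1 := (sum_log_eq_sum_sub_one_iff hg).mp (by linarith) y (mem_univ y)
  rw [he y]
  exact eq_one_div_of_mul_eq_one_right hg1

/-- The inverse-probability e-variable `e(y) = 1/(|Y|·P(y))` uniquely maximizes the
sum of log-e-values over all labels, `Σ_{y'} ln f(y')`, over all `f : Y → (0,∞)` with
`Σ_y P(y) f(y) ≤ 1`. -/
theorem inverse_probability_e_value_optimal
    {Y : Type*} [Fintype Y] [Nonempty Y]
    (P : Y → ℝ) (hP : ∀ y, 0 < P y) (hsum : ∑ y, P y = 1)
    (e : Y → ℝ) (he : ∀ y, e y = 1 / ((Fintype.card Y : ℝ) * P y))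
    (f : Y → ℝ) (hf : ∀ y, 0 < f y) (hfe : ∑ y, P y * f y ≤ 1) :
    (∑ y', Real.log (f y')) ≤ (∑ y', Real.log (e y')) ∧
    ((∑ y', Real.log (f y')) = (∑ y', Real.log (e y')) → f = e) :=
  inverse_probability_e_value_optimal_general P hP e he f hf hfe
end

section
/- The sum over all labels of p-surprisals equals an integral of set-prediction sizes: for a function p : Y → (0,1] on a finite set Y, Σ_{y∈Y} (−ln p(y)) = ∫_0^1 (|Y| − |Γ^ε|) dε/ε, where Γ^ε = {y ∈ Y : p(y) > ε}, and the integral converges because |Y| − |Γ^ε| = 0 for all sufficiently small ε > 0. -/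
open MeasureTheory
open scoped BigOperators

/-- Sum of p-surprisals as an integral of set-prediction sizes: for `p : Y → (0,1]` on a
finite nonempty set `Y`,
`Σ_y (−ln p(y)) = ∫_{(0,1]} (|Y| − |Γ^ε|) dε/ε` where `Γ^ε = {y : p(y) > ε}`;
moreover the integrand is integrable on `(0,1]` (the integral converges, since
`|Y| − |Γ^ε| = 0` for all sufficiently small `ε > 0`). -/
theorem sum_p_surprisal_eq_integral_prediction_sizes
    {Y : Type*} [Fintype Y] [Nonempty Y] [DecidableEq Y]
    (p : Y → ℝ) (hp : ∀ y, p y ∈ Set.Ioc (0 : ℝ) 1) :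
    IntegrableOn
      (fun ε : ℝ => ((Fintype.card Y : ℝ)
        - (Finset.univ.filter (fun y => ε < p y)).card) / ε)
      (Set.Ioc (0 : ℝ) 1) volume ∧
    (∑ y, -Real.log (p y)) =
      ∫ ε in Set.Ioc (0 : ℝ) 1,
        ((Fintype.card Y : ℝ) - (Finset.univ.filter (fun y => ε < p y)).card) / ε := by
  classical
  set F : ℝ → ℝ :=
    fun ε => ∑ y : Y, Set.indicator (Set.Ioc (p y) 1) (fun ε => ε⁻¹) ε with hFdef
  -- integrability of 1/ε on each Ioc (p y) 1
  have hInt : ∀ y : Y, IntegrableOn (fun ε : ℝ => ε⁻¹) (Set.Ioc (p y) 1) volume := by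
    intro y
    have h01 := hp y
    have h : IntervalIntegrable (fun x : ℝ => x⁻¹) volume (p y) 1 := by
      apply intervalIntegral.intervalIntegrable_inv (f := fun x => x) ?_ continuousOn_id
      intro x hx
      rw [Set.uIcc_of_le h01.2] at hx
      exact ne_of_gt (lt_of_lt_of_le h01.1 hx.1)
    exact h.1
  have hIndInt : ∀ y : Y,
      Integrable (Set.indicator (Set.Ioc (p y) 1) (fun ε : ℝ => ε⁻¹))
        (volume.restrict (Set.Ioc (0:ℝ) 1)) := by
    intro y
    exact ((hInt y).integrable_indicator measurableSet_Ioc).integrableOn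
  have hFInt : IntegrableOn F (Set.Ioc (0:ℝ) 1) volume := by
    exact integrable_finset_sum _ (fun y _ => hIndInt y)
  -- a.e. equality with the target function
  have hbad : volume (⋃ y : Y, {p y}) = 0 := by
    refine measure_iUnion_null fun y => measure_singleton _
  have hae : F =ᵐ[volume.restrict (Set.Ioc (0:ℝ) 1)]
      (fun ε => ((Fintype.card Y : ℝ)
        - (Finset.univ.filter (fun y => ε < p y)).card) / ε) := by
    have h1 : ∀ᵐ ε ∂(volume.restrict (Set.Ioc (0:ℝ) 1)), ε ∈ Set.Ioc (0:ℝ) 1 :=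
      ae_restrict_mem measurableSet_Ioc
    have h2 : ∀ᵐ ε ∂(volume.restrict (Set.Ioc (0:ℝ) 1)), ε ∉ ⋃ y : Y, {p y} := by
      refine ae_restrict_of_ae ?_
      rw [ae_iff]
      convert hbad using 2
      ext x; simp
    filter_upwards [h1, h2] with ε hε hne
    have hεne : ∀ y : Y, ε ≠ p y := by
      intro y hy
      exact hne (Set.mem_iUnion.2 ⟨y, by simp [hy]⟩)
    have hstep : ∀ y : Y,
        Set.indicator (Set.Ioc (p y) 1) (fun ε : ℝ => ε⁻¹) ε
          = if ε < p y then 0 else ε⁻¹ := by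
      intro y
      by_cases h : ε < p y
      · rw [Set.indicator_of_notMem (by simp [Set.mem_Ioc]; intro h'; exact absurd h (not_lt.2 h'.le)), if_pos h]
      · have hlt : p y < ε := lt_of_le_of_ne (not_lt.1 h) (fun h' => hεne y h'.symm)
        rw [Set.indicator_of_mem (Set.mem_Ioc.2 ⟨hlt, hε.2⟩), if_neg h]
    have hcard : ((Fintype.card Y : ℝ)
        - (Finset.univ.filter (fun y => ε < p y)).card)
        = ((Finset.univ.filter (fun y => ¬ ε < p y)).card : ℝ) := by
      have := Finset.card_filter_add_card_filter_not
        (s := (Finset.univ : Finset Y)) (p := fun y => ε < p y)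
      rw [Finset.card_univ] at this
      push_cast [← this]
      ring
    calc F ε = ∑ y : Y, (if ε < p y then (0:ℝ) else ε⁻¹) := by
            exact Finset.sum_congr rfl fun y _ => hstep y
      _ = ((Finset.univ.filter (fun y => ¬ ε < p y)).card : ℝ) * ε⁻¹ := by
            rw [Finset.sum_ite, Finset.sum_const, Finset.sum_const]
            simp [mul_comm]
      _ = ((Fintype.card Y : ℝ)
            - (Finset.univ.filter (fun y => ε < p y)).card) / ε := by
            rw [hcard, div_eq_mul_inv]
  -- value of the integral of F
  have hval : ∫ ε in Set.Ioc (0:ℝ) 1, F ε = ∑ y, -Real.log (p y) := by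
    rw [hFdef]
    rw [integral_finset_sum _ (fun y _ => hIndInt y)]
    refine Finset.sum_congr rfl fun y _ => ?_
    rw [MeasureTheory.setIntegral_indicator measurableSet_Ioc]
    have hsub : Set.Ioc (0:ℝ) 1 ∩ Set.Ioc (p y) 1 = Set.Ioc (p y) 1 := by
      rw [Set.inter_eq_right]
      exact Set.Ioc_subset_Ioc_left (hp y).1.le
    rw [hsub, ← intervalIntegral.integral_of_le (hp y).2]
    rw [integral_inv (by
      rw [Set.uIcc_of_le (hp y).2]
      intro h
      exact absurd h.1 (not_le.2 (hp y).1))]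
    rw [one_div, Real.log_inv]
  refine ⟨hFInt.congr hae, ?_⟩
  rw [← integral_congr_ae hae, hval]
end

section
/- Leave-one-out cross-conformal p-values coincide with full conformal p-values in the label-only classification setting: given training labels y_1, ..., y_l in {1,...,Y} with counts n_y, and a postulated test label y', the quantities A and B of leave-one-out cross-conformal prediction, namely A = (Σ_{k=1}^l A_k)/(l+1) with A_k = 1{n_{k,y_k} < n_{k,y'}} and B = (Σ_{k=1}^l B_k + 1)/(l+1) with B_k = 1{n_{k,y_k} = n_{k,y'}}, where n_{k,y} is the count of y among the training labels excluding y_k, equal respectively the full-conformal quantities A = (Σ_{y'' ≠ y' : n_{y''} < n_{y'}+1} n_{y''})/(l+1) and B = (Σ_{y'' : n_{y''} = n_{y'}+1} n_{y''} + n_{y'} + 1)/(l+1). -/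
open scoped BigOperators

/-- Leave-one-out cross-conformal p-values coincide with full conformal p-values in the
label-only classification setting.  Given training labels `y 1, ..., y l` with counts `n c`,
leave-one-out counts `nk k c = n c − 1{y k = c}` (counts excluding the `k`-th observation),
and a postulated test label `y'`, the leave-one-out cross-conformal quantities
`A = (Σ_k 1{nk k (y k) < nk k y'})/(l+1)` and `B = (Σ_k 1{nk k (y k) = nk k y'} + 1)/(l+1)`
equal, respectively, the full-conformal quantities
`A = (Σ_{c ≠ y', n c < n y' + 1} n c)/(l+1)` and
`B = (Σ_{c : n c = n y' + 1} n c + n y' + 1)/(l+1)`. -/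
theorem leave_one_out_ccp_eq_full_conformal
    (l Yc : ℕ) (hl : 0 < l) (y : Fin l → Fin Yc) (y' : Fin Yc)
    (n : Fin Yc → ℕ) (hn : ∀ c, n c = (Finset.univ.filter (fun k => y k = c)).card)
    (nk : Fin l → Fin Yc → ℤ)
    (hnk : ∀ k c, nk k c = (n c : ℤ) - (if y k = c then 1 else 0)) :
    ((∑ k, if nk k (y k) < nk k y' then (1 : ℝ) else 0) / (l + 1) =
      (∑ c ∈ Finset.univ.filter (fun c => c ≠ y' ∧ n c < n y' + 1), (n c : ℝ)) / (l + 1)) ∧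
    (((∑ k, if nk k (y k) = nk k y' then (1 : ℝ) else 0) + 1) / (l + 1) =
      ((∑ c ∈ Finset.univ.filter (fun c => n c = n y' + 1), (n c : ℝ)) + n y' + 1) / (l + 1)) := by
  have key : ∀ g : Fin Yc → ℝ, (∑ k, g (y k)) = ∑ c, (n c : ℝ) * g c := by
    intro g
    rw [← Finset.sum_fiberwise Finset.univ y (fun k => g (y k))]
    refine Finset.sum_congr rfl fun c _ => ?_
    have hinner : ∑ k ∈ Finset.univ.filter (fun k => y k = c), g (y k)
        = ∑ _k ∈ Finset.univ.filter (fun k => y k = c), g c :=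
      Finset.sum_congr rfl fun k hk => by
        simp only [Finset.mem_filter] at hk
        rw [hk.2]
    rw [hinner, Finset.sum_const, hn c]
    simp [mul_comm]
  constructor
  · congr 1
    have h1 : (∑ k, if nk k (y k) < nk k y' then (1:ℝ) else 0)
        = ∑ k, (fun c => if (n c : ℤ) - 1 < (n y' : ℤ) - (if c = y' then 1 else 0)
            then (1:ℝ) else 0) (y k) := by
      refine Finset.sum_congr rfl fun k _ => ?_
      rw [hnk, hnk]
      simp
    rw [h1, key (fun c => if (n c : ℤ) - 1 < (n y' : ℤ) - (if c = y' then 1 else 0)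
            then (1:ℝ) else 0), Finset.sum_filter]
    refine Finset.sum_congr rfl fun c _ => ?_
    by_cases hc : c = y'
    · subst hc; simp
    · simp only [hc, if_false, ne_eq, not_false_eq_true, true_and, sub_zero]
      by_cases h2 : n c < n y' + 1
      · have : (n c : ℤ) - 1 < (n y' : ℤ) := by push_cast; omega
        simp [this, h2]
      · have : ¬ ((n c : ℤ) - 1 < (n y' : ℤ)) := by push_cast; omega
        simp [this, h2]
  · congr 1
    have h1 : (∑ k, if nk k (y k) = nk k y' then (1:ℝ) else 0)
        = ∑ k, (fun c => if (n c : ℤ) - 1 = (n y' : ℤ) - (if c = y' then 1 else 0)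
            then (1:ℝ) else 0) (y k) := by
      refine Finset.sum_congr rfl fun k _ => ?_
      rw [hnk, hnk]
      simp
    rw [h1, key (fun c => if (n c : ℤ) - 1 = (n y' : ℤ) - (if c = y' then 1 else 0)
            then (1:ℝ) else 0)]
    have hsplit : (∑ c, (n c : ℝ) *
        (if (n c : ℤ) - 1 = (n y' : ℤ) - (if c = y' then 1 else 0) then (1:ℝ) else 0))
        = ∑ c, ((if n c = n y' + 1 then (n c : ℝ) else 0)
            + (if c = y' then (n y' : ℝ) else 0)) := by
      refine Finset.sum_congr rfl fun c _ => ?_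
      by_cases hc : c = y'
      · subst hc
        have : ¬ (n c = n c + 1) := by omega
        simp [this]
      · simp only [hc, if_false, sub_zero, add_zero]
        by_cases h2 : n c = n y' + 1
        · have : (n c : ℤ) - 1 = (n y' : ℤ) := by push_cast; omega
          simp [this, h2]
        · have : ¬ ((n c : ℤ) - 1 = (n y' : ℤ)) := by push_cast; omega
          simp [this, h2]
    rw [hsplit, Finset.sum_add_distrib, ← Finset.sum_filter, Finset.sum_ite_eq' Finset.univ y']
    simp [add_assoc]
end

section
/- The inductive conformal e-value is a valid e-value under exchangeability: let z_1, ..., z_{m'}, z_{m'+1} be exchangeable random variables taking values in a measurable space, and let s be a fixed nonnegative score function. Define e = s(z_{m'+1}) / ( (1/(m'+1)) Σ_{i=1}^{m'+1} s(z_i) ), interpreted as 0 if the denominator is 0. Then E[e] ≤ 1. -/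
open MeasureTheory
open scoped BigOperators ENNReal

/-- The inductive conformal e-value is a valid e-value under exchangeability: if
`z 0, ..., z m'` (calibration observations `z 0, ..., z (m'-1)` and test observation
`z m'`) are exchangeable random variables and `s` is a fixed nonnegative measurable
score function, then `e = s(z m') / ((1/(m'+1)) Σ_i s(z i))`, with `e = 0` when the
denominator vanishes, satisfies `E[e] ≤ 1`. -/
theorem inductive_conformal_e_value_valid
    {Ω α : Type*} [MeasurableSpace Ω] [MeasurableSpace α]
    (μ : Measure Ω) [IsProbabilityMeasure μ]
    (m' : ℕ) (z : Fin (m' + 1) → Ω → α) (hz : ∀ i, Measurable (z i))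
    (hexch : ∀ σ : Equiv.Perm (Fin (m' + 1)),
      μ.map (fun ω i => z (σ i) ω) = μ.map (fun ω i => z i ω))
    (s : α → ℝ) (hs : Measurable s) (hs0 : ∀ a, 0 ≤ s a)
    (e : Ω → ℝ)
    (he : ∀ ω, e ω =
      if (∑ i, s (z i ω)) = 0 then 0
      else s (z (Fin.last m') ω) / ((1 / (m' + 1 : ℝ)) * ∑ i, s (z i ω))) :
    ∫ ω, e ω ∂μ ≤ 1 := by
  classical
  set S : (Fin (m' + 1) → α) → ℝ := fun v => ∑ i, s (v i) with hS
  set g : Fin (m' + 1) → (Fin (m' + 1) → α) → ℝ :=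
    fun j v => if S v = 0 then 0 else s (v j) / S v with hg
  have hSnonneg : ∀ v, 0 ≤ S v := fun v => Finset.sum_nonneg fun i _ => hs0 _
  have hgnonneg : ∀ j v, 0 ≤ g j v := by
    intro j v; by_cases h : S v = 0
    · simp [hg, h]
    · simp only [hg, if_neg h]; exact div_nonneg (hs0 _) (hSnonneg v)
  have hgle : ∀ j v, g j v ≤ 1 := by
    intro j v
    by_cases h : S v = 0
    · simp [hg, h]
    · simp only [hg, if_neg h]
      rw [div_le_one (lt_of_le_of_ne (hSnonneg v) (Ne.symm h))]
      exact Finset.single_le_sum (fun i _ => hs0 _) (Finset.mem_univ j)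
  have hSm : Measurable S := Finset.measurable_sum _ fun i _ => hs.comp (measurable_pi_apply i)
  have hgmeas : ∀ j, Measurable (g j) := fun j =>
    Measurable.ite (hSm (measurableSet_singleton 0)) measurable_const
      ((hs.comp (measurable_pi_apply j)).div hSm)
  have hZ : Measurable (fun ω i => z i ω) := measurable_pi_lambda _ hz
  have hint : ∀ j, Integrable (fun ω => g j (fun i => z i ω)) μ := by
    intro j
    refine Integrable.mono' (integrable_const 1) ((hgmeas j).comp hZ).aestronglyMeasurable ?_
    filter_upwards with ω
    rw [Real.norm_eq_abs, abs_of_nonneg (hgnonneg _ _)]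
    exact hgle _ _
  have key : ∀ j, ∫ ω, g j (fun i => z i ω) ∂μ
      = ∫ ω, g (Fin.last m') (fun i => z i ω) ∂μ := by
    intro j
    have hσ := hexch (Equiv.swap j (Fin.last m'))
    have h1 : ∫ ω, g (Fin.last m') (fun i => z i ω) ∂μ
        = ∫ v, g (Fin.last m') v ∂(μ.map (fun ω i => z i ω)) :=
      (integral_map hZ.aemeasurable (hgmeas _).aestronglyMeasurable).symm
    have h2 : ∫ v, g (Fin.last m') v
          ∂(μ.map (fun ω i => z (Equiv.swap j (Fin.last m') i) ω))
        = ∫ ω, g (Fin.last m') (fun i => z (Equiv.swap j (Fin.last m') i) ω) ∂μ :=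
      integral_map (measurable_pi_lambda _ fun i => hz _).aemeasurable
        (hgmeas _).aestronglyMeasurable
    have h3 : ∀ ω, g (Fin.last m') (fun i => z (Equiv.swap j (Fin.last m') i) ω)
        = g j (fun i => z i ω) := by
      intro ω
      have hsum : S (fun i => z (Equiv.swap j (Fin.last m') i) ω) = S (fun i => z i ω) :=
        Fintype.sum_equiv (Equiv.swap j (Fin.last m')) _ _ (fun i => rfl)
      simp only [hg, hsum, Equiv.swap_apply_right]
    rw [h1, ← hσ, h2]
    exact integral_congr_ae (Filter.Eventually.of_forall fun ω => (h3 ω).symm)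
  have hsum_le : ∀ ω, ∑ j, g j (fun i => z i ω) ≤ 1 := by
    intro ω
    by_cases h : S (fun i => z i ω) = 0
    · simp [hg, h]
    · simp only [hg, if_neg h]
      rw [← Finset.sum_div, div_le_one (lt_of_le_of_ne (hSnonneg _) (Ne.symm h))]
  have hsum_int : ∫ ω, ∑ j, g j (fun i => z i ω) ∂μ ≤ 1 := by
    calc ∫ ω, ∑ j, g j (fun i => z i ω) ∂μ ≤ ∫ _ω, (1:ℝ) ∂μ :=
          integral_mono (integrable_finset_sum _ fun j _ => hint j) (integrable_const 1) hsum_le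
      _ = 1 := by simp
  have hsum_eq : ∫ ω, ∑ j, g j (fun i => z i ω) ∂μ
      = (m' + 1 : ℝ) * ∫ ω, g (Fin.last m') (fun i => z i ω) ∂μ := by
    rw [integral_finset_sum _ (fun j _ => hint j),
      Finset.sum_congr rfl (fun j _ => key j), Finset.sum_const]
    simp [nsmul_eq_mul]
  have he' : ∀ ω, e ω = (m' + 1 : ℝ) * g (Fin.last m') (fun i => z i ω) := by
    intro ω
    rw [he ω, show (∑ i, s (z i ω)) = S (fun i => z i ω) from rfl]
    by_cases h : S (fun i => z i ω) = 0
    · simp only [hg, if_pos h, mul_zero]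
    · simp only [hg, if_neg h]
      have hm : (m' + 1 : ℝ) ≠ 0 := by positivity
      field_simp
  calc ∫ ω, e ω ∂μ = (m' + 1 : ℝ) * ∫ ω, g (Fin.last m') (fun i => z i ω) ∂μ := by
        rw [← integral_const_mul]
        exact integral_congr_ae (Filter.Eventually.of_forall he')
    _ = ∫ ω, ∑ j, g j (fun i => z i ω) ∂μ := hsum_eq.symm
    _ ≤ 1 := hsum_int
end
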